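/- In the ETH-reduction graph G' built from undirected graphs G and H (with n_H ≤ n_G), any 2-rejection-proof packing C of vertex-disjoint directed 3-cycles covering at least 3·n_G of the 3·n_G + 1 vertices must contain exactly n_H I-cycles and exactly n_G − n_H F-cycles and no other cycles; in particular C covers every vertex except z. -/

import Mathlib

open Finset

/-- The vertex set of the ETH-reduction graph G': two copies of V(H), one copy of
V(G), two copies of [n_G - n_H], and an extra vertex z. -/
inductive Vtx (nH nG : ℕ) where
  | w1 : Fin nH → Vtx nH nG
  | w2 : Fin nH → Vtx nH nG
  | w3 : Fin nG → Vtx nH nG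
  | w4 : Fin (nG - nH) → Vtx nH nG
  | w5 : Fin (nG - nH) → Vtx nH nG
  | z  : Vtx nH nG
deriving DecidableEq

/-- The directed edge relation of the ETH-reduction graph G' built from G and H
(using the linear order on Fin nG as the fixed ordering on V(G)). -/
def Edg {nH nG : ℕ} (G : SimpleGraph (Fin nG)) (H : SimpleGraph (Fin nH)) :
    Vtx nH nG → Vtx nH nG → Prop
  | .w1 u, .w1 v => H.Adj u v
  | .w1 u, .w2 v => u = v
  | .w2 _, .w3 _ => True
  | .w3 _, .w1 _ => True
  | .w4 i, .w5 j => i = j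
  | .w3 _, .w4 _ => True
  | .w5 _, .w3 _ => True
  | .w3 _, .z => True
  | .z, .w3 _ => True
  | .w3 x, .w3 y => ¬ G.Adj x y ∧ x < y
  | _, _ => False

/-- Agent 1 owns W₁ ∪ W₃ ∪ W₅ ∪ {z}. -/
def own1 {nH nG : ℕ} : Vtx nH nG → Bool
  | .w2 _ => false
  | .w4 _ => false
  | _ => true

/-- Agent 2 owns W₂ ∪ W₄. -/
def own2 {nH nG : ℕ} (v : Vtx nH nG) : Bool := ! own1 v

/-- `C` is (the vertex set of) a directed cycle of length 2 or 3 in the digraph `E`. -/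
def IsCyc {V : Type*} [DecidableEq V] (E : V → V → Prop) (C : Finset V) : Prop :=
  (∃ a b, a ≠ b ∧ C = {a, b} ∧ E a b ∧ E b a) ∨
  (∃ a b c, a ≠ b ∧ a ≠ c ∧ b ≠ c ∧ C = {a, b, c} ∧ E a b ∧ E b c ∧ E c a)

/-- A collection of finsets is pairwise disjoint. -/
def PairwiseDisj {V : Type*} [DecidableEq V] (X : Finset (Finset V)) : Prop :=
  (X : Set (Finset V)).PairwiseDisjoint id

/-- The number of vertices of the given agent covered by the packing `C`. -/
def covB {V : Type*} [DecidableEq V] (own : V → Bool) (C : Finset (Finset V)) : ℕ :=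
  ((C.biUnion id).filter (fun v => own v)).card

/-- The agent owning the vertices with `own v = true` c-rejects the packing `C`:
it can remove at most `c` cycles and add internal cycles so that the result is
pairwise vertex-disjoint and covers strictly more of its own vertices. -/
def CRejects {V : Type*} [DecidableEq V] (E : V → V → Prop) (own : V → Bool)
    (c : ℕ) (C : Finset (Finset V)) : Prop :=
  ∃ Crej ⊆ C, Crej.card ≤ c ∧ ∃ Cint : Finset (Finset V),
    (∀ D ∈ Cint, IsCyc E D ∧ ∀ v ∈ D, own v = true) ∧
    PairwiseDisj ((C \ Crej) ∪ Cint) ∧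
    covB own C < covB own ((C \ Crej) ∪ Cint)

/-- The agent owning the vertices with `own v = true` rejects the packing `C`
(no bound on the number of removed cycles). -/
def RejAny {V : Type*} [DecidableEq V] (E : V → V → Prop) (own : V → Bool)
    (C : Finset (Finset V)) : Prop :=
  ∃ Crej ⊆ C, ∃ Cint : Finset (Finset V),
    (∀ D ∈ Cint, IsCyc E D ∧ ∀ v ∈ D, own v = true) ∧
    PairwiseDisj ((C \ Crej) ∪ Cint) ∧
    covB own C < covB own ((C \ Crej) ∪ Cint)

section Aux
variable {nH nG : ℕ}

def ShA (D : Finset (Vtx nH nG)) : Prop :=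
  ∃ u v : Fin nH, u ≠ v ∧ D = {Vtx.w1 u, Vtx.w1 v}
def ShT (D : Finset (Vtx nH nG)) : Prop :=
  ∃ u v w : Fin nH, u ≠ v ∧ u ≠ w ∧ v ≠ w ∧ D = {Vtx.w1 u, Vtx.w1 v, Vtx.w1 w}
def ShI (D : Finset (Vtx nH nG)) : Prop :=
  ∃ u x, D = ({Vtx.w1 u, Vtx.w2 u, Vtx.w3 x} : Finset (Vtx nH nG))
def ShF (D : Finset (Vtx nH nG)) : Prop :=
  ∃ x i, D = ({Vtx.w3 x, Vtx.w4 i, Vtx.w5 i} : Finset (Vtx nH nG))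
def ShN (D : Finset (Vtx nH nG)) : Prop :=
  ∃ x y : Fin nG, x ≠ y ∧ D = {Vtx.w3 x, Vtx.w3 y, Vtx.z}
def ShR (D : Finset (Vtx nH nG)) : Prop :=
  ∃ x : Fin nG, D = {Vtx.w3 x, Vtx.z}

lemma shape_of_isCyc {G : SimpleGraph (Fin nG)} {H : SimpleGraph (Fin nH)}
    {D : Finset (Vtx nH nG)} (hD : IsCyc (Edg G H) D) :
    ShA D ∨ ShT D ∨ ShI D ∨ ShF D ∨ ShN D ∨ ShR D := by
  rcases hD with ⟨a, b, hab, rfl, h1, h2⟩ | ⟨a, b, c, hab, hac, hbc, rfl, h1, h2, h3⟩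
  · cases a <;> cases b <;> simp only [Edg] at h1 h2
    case w1.w1 =>
      rename_i u v
      exact Or.inl ⟨u, v, by simpa using hab, rfl⟩
    case w3.w3 =>
      exact absurd (h1.2.trans h2.2) (lt_irrefl _)
    case w3.z =>
      rename_i x
      exact Or.inr <| Or.inr <| Or.inr <| Or.inr <| Or.inr ⟨x, rfl⟩
    case z.w3 =>
      rename_i x
      exact Or.inr <| Or.inr <| Or.inr <| Or.inr <| Or.inr ⟨x, Finset.pair_comm _ _⟩
  · cases a <;> cases b <;> cases c <;> simp only [Edg] at h1 h2 h3
    case w1.w1.w1 =>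
      rename_i u v w
      exact Or.inr <| Or.inl
        ⟨u, v, w, by simpa using hab, by simpa using hac, by simpa using hbc, rfl⟩
    case w1.w2.w3 =>
      rename_i u v x
      exact Or.inr <| Or.inr <| Or.inl ⟨u, x, by rw [← h1]⟩
    case w2.w3.w1 =>
      rename_i u x v
      exact Or.inr <| Or.inr <| Or.inl ⟨u, x, by rw [h3]; ext w; simp; tauto⟩
    case w3.w1.w2 =>
      rename_i x u v
      exact Or.inr <| Or.inr <| Or.inl ⟨u, x, by rw [← h2]; ext w; simp; tauto⟩
    case w3.w3.w3 =>
      exact absurd ((h1.2.trans h2.2).trans h3.2) (lt_irrefl _)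
    case w3.w3.z =>
      rename_i x y
      exact Or.inr <| Or.inr <| Or.inr <| Or.inr <| Or.inl ⟨x, y, ne_of_lt h1.2, rfl⟩
    case w3.w4.w5 =>
      rename_i x i j
      exact Or.inr <| Or.inr <| Or.inr <| Or.inl ⟨x, i, by rw [← h2]⟩
    case w3.z.w3 =>
      rename_i x y
      exact Or.inr <| Or.inr <| Or.inr <| Or.inr <| Or.inl
        ⟨y, x, ne_of_lt h3.2, by ext w; simp; tauto⟩
    case w4.w5.w3 =>
      rename_i i j x
      exact Or.inr <| Or.inr <| Or.inr <| Or.inl ⟨x, i, by rw [← h1]; ext w; simp; tauto⟩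
    case w5.w3.w4 =>
      rename_i i x j
      exact Or.inr <| Or.inr <| Or.inr <| Or.inl ⟨x, i, by rw [h3]; ext w; simp; tauto⟩
    case z.w3.w3 =>
      rename_i x y
      exact Or.inr <| Or.inr <| Or.inr <| Or.inr <| Or.inl
        ⟨x, y, ne_of_lt h2.2, by ext w; simp; tauto⟩


def q1 : Vtx nH nG → Bool | .w1 _ => true | _ => false
def q2 : Vtx nH nG → Bool | .w2 _ => true | _ => false
def q3 : Vtx nH nG → Bool | .w3 _ => true | _ => false
def q4 : Vtx nH nG → Bool | .w4 _ => true | _ => false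
def q5 : Vtx nH nG → Bool | .w5 _ => true | _ => false
def qz : Vtx nH nG → Bool | .z => true | _ => false

lemma cardsA {D : Finset (Vtx nH nG)} (h : ShA D) :
    (D.filter (q1 ·)).card = 2 ∧ (D.filter (q2 ·)).card = 0 ∧
    (D.filter (q3 ·)).card = 0 ∧ (D.filter (q4 ·)).card = 0 ∧
    (D.filter (q5 ·)).card = 0 ∧ (D.filter (qz ·)).card = 0 ∧ D.card = 2 := by
  obtain ⟨u, v, huv, rfl⟩ := h
  simp only [Finset.filter_insert, Finset.filter_singleton]
  simp [Finset.filter_insert, Finset.filter_singleton, q1, q2, q3, q4, q5, qz,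
    Finset.card_insert_of_notMem, huv]

lemma cardsT {D : Finset (Vtx nH nG)} (h : ShT D) :
    (D.filter (q1 ·)).card = 3 ∧ (D.filter (q2 ·)).card = 0 ∧
    (D.filter (q3 ·)).card = 0 ∧ (D.filter (q4 ·)).card = 0 ∧
    (D.filter (q5 ·)).card = 0 ∧ (D.filter (qz ·)).card = 0 ∧ D.card = 3 := by
  obtain ⟨u, v, w, huv, huw, hvw, rfl⟩ := h
  simp only [Finset.filter_insert, Finset.filter_singleton]
  simp [Finset.filter_insert, Finset.filter_singleton, q1, q2, q3, q4, q5, qz,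
    Finset.card_insert_of_notMem, huv, huw, hvw]

lemma cardsI {D : Finset (Vtx nH nG)} (h : ShI D) :
    (D.filter (q1 ·)).card = 1 ∧ (D.filter (q2 ·)).card = 1 ∧
    (D.filter (q3 ·)).card = 1 ∧ (D.filter (q4 ·)).card = 0 ∧
    (D.filter (q5 ·)).card = 0 ∧ (D.filter (qz ·)).card = 0 ∧ D.card = 3 := by
  obtain ⟨u, x, rfl⟩ := h
  simp only [Finset.filter_insert, Finset.filter_singleton]
  simp [Finset.filter_insert, Finset.filter_singleton, q1, q2, q3, q4, q5, qz,
    Finset.card_insert_of_notMem]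

lemma cardsF {D : Finset (Vtx nH nG)} (h : ShF D) :
    (D.filter (q1 ·)).card = 0 ∧ (D.filter (q2 ·)).card = 0 ∧
    (D.filter (q3 ·)).card = 1 ∧ (D.filter (q4 ·)).card = 1 ∧
    (D.filter (q5 ·)).card = 1 ∧ (D.filter (qz ·)).card = 0 ∧ D.card = 3 := by
  obtain ⟨x, i, rfl⟩ := h
  simp only [Finset.filter_insert, Finset.filter_singleton]
  simp [Finset.filter_insert, Finset.filter_singleton, q1, q2, q3, q4, q5, qz,
    Finset.card_insert_of_notMem]

lemma cardsN {D : Finset (Vtx nH nG)} (h : ShN D) :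
    (D.filter (q1 ·)).card = 0 ∧ (D.filter (q2 ·)).card = 0 ∧
    (D.filter (q3 ·)).card = 2 ∧ (D.filter (q4 ·)).card = 0 ∧
    (D.filter (q5 ·)).card = 0 ∧ (D.filter (qz ·)).card = 1 ∧ D.card = 3 := by
  obtain ⟨x, y, hxy, rfl⟩ := h
  simp only [Finset.filter_insert, Finset.filter_singleton]
  simp [Finset.filter_insert, Finset.filter_singleton, q1, q2, q3, q4, q5, qz,
    Finset.card_insert_of_notMem, hxy]

lemma cardsR {D : Finset (Vtx nH nG)} (h : ShR D) :
    (D.filter (q1 ·)).card = 0 ∧ (D.filter (q2 ·)).card = 0 ∧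
    (D.filter (q3 ·)).card = 1 ∧ (D.filter (q4 ·)).card = 0 ∧
    (D.filter (q5 ·)).card = 0 ∧ (D.filter (qz ·)).card = 1 ∧ D.card = 2 := by
  obtain ⟨x, rfl⟩ := h
  simp only [Finset.filter_insert, Finset.filter_singleton]
  simp [Finset.filter_insert, Finset.filter_singleton, q1, q2, q3, q4, q5, qz,
    Finset.card_insert_of_notMem]


instance (D : Finset (Vtx nH nG)) : Decidable (ShA D) := by unfold ShA; infer_instance
instance (D : Finset (Vtx nH nG)) : Decidable (ShT D) := by unfold ShT; infer_instance
instance (D : Finset (Vtx nH nG)) : Decidable (ShI D) := by unfold ShI; infer_instance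
instance (D : Finset (Vtx nH nG)) : Decidable (ShF D) := by unfold ShF; infer_instance
instance (D : Finset (Vtx nH nG)) : Decidable (ShN D) := by unfold ShN; infer_instance
instance (D : Finset (Vtx nH nG)) : Decidable (ShR D) := by unfold ShR; infer_instance

lemma cards_of_isCyc {G : SimpleGraph (Fin nG)} {H : SimpleGraph (Fin nH)}
    {D : Finset (Vtx nH nG)} (hD : IsCyc (Edg G H) D) :
    (D.filter (q1 ·)).card =
      2 * (if ShA D then 1 else 0) + 3 * (if ShT D then 1 else 0) + (if ShI D then 1 else 0) ∧
    (D.filter (q2 ·)).card = (if ShI D then 1 else 0) ∧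
    (D.filter (q3 ·)).card = (if ShI D then 1 else 0) + (if ShF D then 1 else 0)
      + 2 * (if ShN D then 1 else 0) + (if ShR D then 1 else 0) ∧
    (D.filter (q4 ·)).card = (if ShF D then 1 else 0) ∧
    (D.filter (q5 ·)).card = (if ShF D then 1 else 0) ∧
    (D.filter (qz ·)).card = (if ShN D then 1 else 0) + (if ShR D then 1 else 0) ∧
    D.card = 2 * (if ShA D then 1 else 0) + 3 * (if ShT D then 1 else 0)
      + 3 * (if ShI D then 1 else 0) + 3 * (if ShF D then 1 else 0)
      + 3 * (if ShN D then 1 else 0) + 2 * (if ShR D then 1 else 0) := by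
  rcases shape_of_isCyc hD with h | h | h | h | h | h
  · obtain ⟨e1, e2, e3, e4, e5, e6, e7⟩ := cardsA h
    have b1 : (if ShA D then (1:ℕ) else 0) = 1 := if_pos h
    have b2 : (if ShT D then (1:ℕ) else 0) = 0 := if_neg fun h' => by
      have := (cardsT h').1; omega
    have b3 : (if ShI D then (1:ℕ) else 0) = 0 := if_neg fun h' => by
      have := (cardsI h').1; omega
    have b4 : (if ShF D then (1:ℕ) else 0) = 0 := if_neg fun h' => by
      have := (cardsF h').1; omega
    have b5 : (if ShN D then (1:ℕ) else 0) = 0 := if_neg fun h' => by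
      have := (cardsN h').1; omega
    have b6 : (if ShR D then (1:ℕ) else 0) = 0 := if_neg fun h' => by
      have := (cardsR h').1; omega
    simp only [b1, b2, b3, b4, b5, b6]
    omega
  · obtain ⟨e1, e2, e3, e4, e5, e6, e7⟩ := cardsT h
    have b1 : (if ShA D then (1:ℕ) else 0) = 0 := if_neg fun h' => by
      have := (cardsA h').1; omega
    have b2 : (if ShT D then (1:ℕ) else 0) = 1 := if_pos h
    have b3 : (if ShI D then (1:ℕ) else 0) = 0 := if_neg fun h' => by
      have := (cardsI h').1; omega
    have b4 : (if ShF D then (1:ℕ) else 0) = 0 := if_neg fun h' => by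
      have := (cardsF h').1; omega
    have b5 : (if ShN D then (1:ℕ) else 0) = 0 := if_neg fun h' => by
      have := (cardsN h').1; omega
    have b6 : (if ShR D then (1:ℕ) else 0) = 0 := if_neg fun h' => by
      have := (cardsR h').1; omega
    simp only [b1, b2, b3, b4, b5, b6]
    omega
  · obtain ⟨e1, e2, e3, e4, e5, e6, e7⟩ := cardsI h
    have b1 : (if ShA D then (1:ℕ) else 0) = 0 := if_neg fun h' => by
      have := (cardsA h').2.1; omega
    have b2 : (if ShT D then (1:ℕ) else 0) = 0 := if_neg fun h' => by
      have := (cardsT h').2.1; omega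
    have b3 : (if ShI D then (1:ℕ) else 0) = 1 := if_pos h
    have b4 : (if ShF D then (1:ℕ) else 0) = 0 := if_neg fun h' => by
      have := (cardsF h').2.1; omega
    have b5 : (if ShN D then (1:ℕ) else 0) = 0 := if_neg fun h' => by
      have := (cardsN h').2.1; omega
    have b6 : (if ShR D then (1:ℕ) else 0) = 0 := if_neg fun h' => by
      have := (cardsR h').2.1; omega
    simp only [b1, b2, b3, b4, b5, b6]
    omega
  · obtain ⟨e1, e2, e3, e4, e5, e6, e7⟩ := cardsF h
    have b1 : (if ShA D then (1:ℕ) else 0) = 0 := if_neg fun h' => by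
      have := (cardsA h').2.2.2.1; omega
    have b2 : (if ShT D then (1:ℕ) else 0) = 0 := if_neg fun h' => by
      have := (cardsT h').2.2.2.1; omega
    have b3 : (if ShI D then (1:ℕ) else 0) = 0 := if_neg fun h' => by
      have := (cardsI h').2.2.2.1; omega
    have b4 : (if ShF D then (1:ℕ) else 0) = 1 := if_pos h
    have b5 : (if ShN D then (1:ℕ) else 0) = 0 := if_neg fun h' => by
      have := (cardsN h').2.2.2.1; omega
    have b6 : (if ShR D then (1:ℕ) else 0) = 0 := if_neg fun h' => by
      have := (cardsR h').2.2.2.1; omega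
    simp only [b1, b2, b3, b4, b5, b6]
    omega
  · obtain ⟨e1, e2, e3, e4, e5, e6, e7⟩ := cardsN h
    have b1 : (if ShA D then (1:ℕ) else 0) = 0 := if_neg fun h' => by
      have := (cardsA h').2.2.1; omega
    have b2 : (if ShT D then (1:ℕ) else 0) = 0 := if_neg fun h' => by
      have := (cardsT h').2.2.1; omega
    have b3 : (if ShI D then (1:ℕ) else 0) = 0 := if_neg fun h' => by
      have := (cardsI h').2.2.1; omega
    have b4 : (if ShF D then (1:ℕ) else 0) = 0 := if_neg fun h' => by
      have := (cardsF h').2.2.1; omega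
    have b5 : (if ShN D then (1:ℕ) else 0) = 1 := if_pos h
    have b6 : (if ShR D then (1:ℕ) else 0) = 0 := if_neg fun h' => by
      have := (cardsR h').2.2.1; omega
    simp only [b1, b2, b3, b4, b5, b6]
    omega
  · obtain ⟨e1, e2, e3, e4, e5, e6, e7⟩ := cardsR h
    have b1 : (if ShA D then (1:ℕ) else 0) = 0 := if_neg fun h' => by
      have := (cardsA h').2.2.1; omega
    have b2 : (if ShT D then (1:ℕ) else 0) = 0 := if_neg fun h' => by
      have := (cardsT h').2.2.1; omega
    have b3 : (if ShI D then (1:ℕ) else 0) = 0 := if_neg fun h' => by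
      have := (cardsI h').2.2.2.2.2.1; omega
    have b4 : (if ShF D then (1:ℕ) else 0) = 0 := if_neg fun h' => by
      have := (cardsF h').2.2.2.2.2.1; omega
    have b5 : (if ShN D then (1:ℕ) else 0) = 0 := if_neg fun h' => by
      have := (cardsN h').2.2.1; omega
    have b6 : (if ShR D then (1:ℕ) else 0) = 1 := if_pos h
    simp only [b1, b2, b3, b4, b5, b6]
    omega

end Aux

/-- Structure of 2-rejection-proof packings covering at least 3·n_G vertices in
the ETH-reduction graph: exactly n_H I-cycles, exactly n_G - n_H F-cycles, no
other cycles, and every vertex except z is covered. -/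
theorem stmt15 {nH nG : ℕ} (hn : nH ≤ nG)
    (G : SimpleGraph (Fin nG)) (H : SimpleGraph (Fin nH))
    (C : Finset (Finset (Vtx nH nG)))
    (hcyc : ∀ D ∈ C, IsCyc (Edg G H) D)
    (hdisj : PairwiseDisj C)
    (hrp1 : ¬ CRejects (Edg G H) own1 2 C)
    (hrp2 : ¬ CRejects (Edg G H) own2 2 C)
    (hcov : 3 * nG ≤ (C.biUnion id).card) :
    (C.filter (fun D => ∃ u x,
        D = ({Vtx.w1 u, Vtx.w2 u, Vtx.w3 x} : Finset (Vtx nH nG)))).card = nH ∧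
    (C.filter (fun D => ∃ x i,
        D = ({Vtx.w3 x, Vtx.w4 i, Vtx.w5 i} : Finset (Vtx nH nG)))).card = nG - nH ∧
    (∀ D ∈ C,
      (∃ u x, D = ({Vtx.w1 u, Vtx.w2 u, Vtx.w3 x} : Finset (Vtx nH nG))) ∨
      (∃ x i, D = ({Vtx.w3 x, Vtx.w4 i, Vtx.w5 i} : Finset (Vtx nH nG)))) ∧
    (∀ v : Vtx nH nG, v ≠ Vtx.z → v ∈ C.biUnion id) := by
  classical
  have hdis : ∀ x ∈ C, ∀ y ∈ C, x ≠ y → Disjoint (id x) (id y) :=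
    fun x hx y hy hxy => hdisj (Finset.mem_coe.mpr hx) (Finset.mem_coe.mpr hy) hxy
  have hsum : ∀ q : Vtx nH nG → Bool,
      ((C.biUnion id).filter (q ·)).card = ∑ D ∈ C, (D.filter (q ·)).card := by
    intro q
    rw [Finset.filter_biUnion]
    exact Finset.card_biUnion fun x hx y hy hxy =>
      (hdis x hx y hy hxy).mono (Finset.filter_subset _ _) (Finset.filter_subset _ _)
  have eA : ∑ D ∈ C, (if ShA D then (1:ℕ) else 0) = (C.filter ShA).card :=
    (Finset.card_filter _ _).symm
  have eT : ∑ D ∈ C, (if ShT D then (1:ℕ) else 0) = (C.filter ShT).card :=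
    (Finset.card_filter _ _).symm
  have eI : ∑ D ∈ C, (if ShI D then (1:ℕ) else 0) = (C.filter ShI).card :=
    (Finset.card_filter _ _).symm
  have eF : ∑ D ∈ C, (if ShF D then (1:ℕ) else 0) = (C.filter ShF).card :=
    (Finset.card_filter _ _).symm
  have eN : ∑ D ∈ C, (if ShN D then (1:ℕ) else 0) = (C.filter ShN).card :=
    (Finset.card_filter _ _).symm
  have eR : ∑ D ∈ C, (if ShR D then (1:ℕ) else 0) = (C.filter ShR).card :=
    (Finset.card_filter _ _).symm
  have hq1 : ((C.biUnion id).filter (q1 ·)).card =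
      2 * (C.filter ShA).card + 3 * (C.filter ShT).card + (C.filter ShI).card := by
    rw [hsum q1, Finset.sum_congr rfl fun D hD => (cards_of_isCyc (hcyc D hD)).1]
    simp only [Finset.sum_add_distrib, ← Finset.mul_sum, eA, eT, eI]
  have hq2 : ((C.biUnion id).filter (q2 ·)).card = (C.filter ShI).card := by
    rw [hsum q2, Finset.sum_congr rfl fun D hD => (cards_of_isCyc (hcyc D hD)).2.1, eI]
  have hq3 : ((C.biUnion id).filter (q3 ·)).card =
      (C.filter ShI).card + (C.filter ShF).card
        + 2 * (C.filter ShN).card + (C.filter ShR).card := by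
    rw [hsum q3, Finset.sum_congr rfl fun D hD => (cards_of_isCyc (hcyc D hD)).2.2.1]
    simp only [Finset.sum_add_distrib, ← Finset.mul_sum, eI, eF, eN, eR]
  have hq4 : ((C.biUnion id).filter (q4 ·)).card = (C.filter ShF).card := by
    rw [hsum q4, Finset.sum_congr rfl fun D hD => (cards_of_isCyc (hcyc D hD)).2.2.2.1, eF]
  have hq5 : ((C.biUnion id).filter (q5 ·)).card = (C.filter ShF).card := by
    rw [hsum q5, Finset.sum_congr rfl fun D hD => (cards_of_isCyc (hcyc D hD)).2.2.2.2.1, eF]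
  have hqz : ((C.biUnion id).filter (qz ·)).card =
      (C.filter ShN).card + (C.filter ShR).card := by
    rw [hsum qz, Finset.sum_congr rfl fun D hD => (cards_of_isCyc (hcyc D hD)).2.2.2.2.2.1]
    simp only [Finset.sum_add_distrib, eN, eR]
  have hq7 : (C.biUnion id).card =
      2 * (C.filter ShA).card + 3 * (C.filter ShT).card + 3 * (C.filter ShI).card
        + 3 * (C.filter ShF).card + 3 * (C.filter ShN).card + 2 * (C.filter ShR).card := by
    rw [Finset.card_biUnion hdis]
    simp only [id_eq]
    rw [Finset.sum_congr rfl fun D hD => (cards_of_isCyc (hcyc D hD)).2.2.2.2.2.2]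
    simp only [Finset.sum_add_distrib, ← Finset.mul_sum, eA, eT, eI, eF, eN, eR]
  have inj1 : Function.Injective (Vtx.w1 : Fin nH → Vtx nH nG) := fun a b h => Vtx.w1.inj h
  have inj2 : Function.Injective (Vtx.w2 : Fin nH → Vtx nH nG) := fun a b h => Vtx.w2.inj h
  have inj3 : Function.Injective (Vtx.w3 : Fin nG → Vtx nH nG) := fun a b h => Vtx.w3.inj h
  have inj4 : Function.Injective (Vtx.w4 : Fin (nG - nH) → Vtx nH nG) := fun a b h => Vtx.w4.inj h
  have inj5 : Function.Injective (Vtx.w5 : Fin (nG - nH) → Vtx nH nG) := fun a b h => Vtx.w5.inj h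
  have him1 : (Finset.univ.image (Vtx.w1 : Fin nH → Vtx nH nG)).card = nH := by
    rw [Finset.card_image_of_injective _ inj1, Finset.card_univ, Fintype.card_fin]
  have him2 : (Finset.univ.image (Vtx.w2 : Fin nH → Vtx nH nG)).card = nH := by
    rw [Finset.card_image_of_injective _ inj2, Finset.card_univ, Fintype.card_fin]
  have him3 : (Finset.univ.image (Vtx.w3 : Fin nG → Vtx nH nG)).card = nG := by
    rw [Finset.card_image_of_injective _ inj3, Finset.card_univ, Fintype.card_fin]
  have him4 : (Finset.univ.image (Vtx.w4 : Fin (nG - nH) → Vtx nH nG)).card = nG - nH := by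
    rw [Finset.card_image_of_injective _ inj4, Finset.card_univ, Fintype.card_fin]
  have him5 : (Finset.univ.image (Vtx.w5 : Fin (nG - nH) → Vtx nH nG)).card = nG - nH := by
    rw [Finset.card_image_of_injective _ inj5, Finset.card_univ, Fintype.card_fin]
  have sub1 : (C.biUnion id).filter (q1 ·) ⊆ Finset.univ.image (Vtx.w1 : Fin nH → Vtx nH nG) := by
    intro v hv
    have hq := (Finset.mem_filter.mp hv).2
    cases v <;> simp [q1] at hq <;> simp
  have sub2 : (C.biUnion id).filter (q2 ·) ⊆ Finset.univ.image (Vtx.w2 : Fin nH → Vtx nH nG) := by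
    intro v hv
    have hq := (Finset.mem_filter.mp hv).2
    cases v <;> simp [q2] at hq <;> simp
  have sub3 : (C.biUnion id).filter (q3 ·) ⊆ Finset.univ.image (Vtx.w3 : Fin nG → Vtx nH nG) := by
    intro v hv
    have hq := (Finset.mem_filter.mp hv).2
    cases v <;> simp [q3] at hq <;> simp
  have sub4 : (C.biUnion id).filter (q4 ·) ⊆
      Finset.univ.image (Vtx.w4 : Fin (nG - nH) → Vtx nH nG) := by
    intro v hv
    have hq := (Finset.mem_filter.mp hv).2
    cases v <;> simp [q4] at hq <;> simp
  have sub5 : (C.biUnion id).filter (q5 ·) ⊆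
      Finset.univ.image (Vtx.w5 : Fin (nG - nH) → Vtx nH nG) := by
    intro v hv
    have hq := (Finset.mem_filter.mp hv).2
    cases v <;> simp [q5] at hq <;> simp
  have subz : (C.biUnion id).filter (qz ·) ⊆ {Vtx.z} := by
    intro v hv
    have hq := (Finset.mem_filter.mp hv).2
    cases v <;> simp [qz] at hq <;> simp
  have cap1 : ((C.biUnion id).filter (q1 ·)).card ≤ nH :=
    le_trans (Finset.card_le_card sub1) (le_of_eq him1)
  have cap2 : ((C.biUnion id).filter (q2 ·)).card ≤ nH :=
    le_trans (Finset.card_le_card sub2) (le_of_eq him2)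
  have cap3 : ((C.biUnion id).filter (q3 ·)).card ≤ nG :=
    le_trans (Finset.card_le_card sub3) (le_of_eq him3)
  have cap4 : ((C.biUnion id).filter (q4 ·)).card ≤ nG - nH :=
    le_trans (Finset.card_le_card sub4) (le_of_eq him4)
  have cap5 : ((C.biUnion id).filter (q5 ·)).card ≤ nG - nH :=
    le_trans (Finset.card_le_card sub5) (le_of_eq him5)
  have capz : ((C.biUnion id).filter (qz ·)).card ≤ 1 :=
    (Finset.card_le_card subz).trans (by simp)
  rw [hq1] at cap1
  rw [hq2] at cap2
  rw [hq3] at cap3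
  rw [hq4] at cap4
  rw [hq5] at cap5
  rw [hqz] at capz
  rw [hq7] at hcov
  have key : (C.filter ShA).card = 0 ∧ (C.filter ShT).card = 0 ∧
      (C.filter ShI).card = nH ∧ (C.filter ShF).card = nG - nH ∧
      (C.filter ShN).card = 0 ∧ (C.filter ShR).card = 0 := by
    clear hq1 hq2 hq3 hq4 hq5 hqz hq7 hdis hsum eA eT eI eF eN eR hcyc hdisj hrp1 hrp2
    by_cases hR : (C.filter ShR).card = 0
    · omega
    · by_cases hA : (C.filter ShA).card = 0 <;> omega
  obtain ⟨kA, kT, kI, kF, kN, kR⟩ := key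
  have cov1 : (C.biUnion id).filter (q1 ·) = Finset.univ.image (Vtx.w1 : Fin nH → Vtx nH nG) :=
    Finset.eq_of_subset_of_card_le sub1 (by omega)
  have cov2 : (C.biUnion id).filter (q2 ·) = Finset.univ.image (Vtx.w2 : Fin nH → Vtx nH nG) :=
    Finset.eq_of_subset_of_card_le sub2 (by omega)
  have cov3 : (C.biUnion id).filter (q3 ·) = Finset.univ.image (Vtx.w3 : Fin nG → Vtx nH nG) :=
    Finset.eq_of_subset_of_card_le sub3 (by omega)
  have cov4 : (C.biUnion id).filter (q4 ·) =
      Finset.univ.image (Vtx.w4 : Fin (nG - nH) → Vtx nH nG) :=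
    Finset.eq_of_subset_of_card_le sub4 (by omega)
  have cov5 : (C.biUnion id).filter (q5 ·) =
      Finset.univ.image (Vtx.w5 : Fin (nG - nH) → Vtx nH nG) :=
    Finset.eq_of_subset_of_card_le sub5 (by omega)
  refine ⟨kI, kF, ?_, ?_⟩
  · intro D hD
    rcases shape_of_isCyc (hcyc D hD) with h | h | h | h | h | h
    · exact absurd (Finset.mem_filter.mpr ⟨hD, h⟩) (by simp [Finset.card_eq_zero.mp kA])
    · exact absurd (Finset.mem_filter.mpr ⟨hD, h⟩) (by simp [Finset.card_eq_zero.mp kT])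
    · exact Or.inl h
    · exact Or.inr h
    · exact absurd (Finset.mem_filter.mpr ⟨hD, h⟩) (by simp [Finset.card_eq_zero.mp kN])
    · exact absurd (Finset.mem_filter.mpr ⟨hD, h⟩) (by simp [Finset.card_eq_zero.mp kR])
  · intro v hv
    cases v with
    | w1 u =>
      have m : Vtx.w1 u ∈ (C.biUnion id).filter (q1 ·) := by rw [cov1]; simp
      exact (Finset.mem_filter.mp m).1
    | w2 u =>
      have m : Vtx.w2 u ∈ (C.biUnion id).filter (q2 ·) := by rw [cov2]; simp
      exact (Finset.mem_filter.mp m).1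
    | w3 x =>
      have m : Vtx.w3 x ∈ (C.biUnion id).filter (q3 ·) := by rw [cov3]; simp
      exact (Finset.mem_filter.mp m).1
    | w4 i =>
      have m : Vtx.w4 i ∈ (C.biUnion id).filter (q4 ·) := by rw [cov4]; simp
      exact (Finset.mem_filter.mp m).1
    | w5 i =>
      have m : Vtx.w5 i ∈ (C.biUnion id).filter (q5 ·) := by rw [cov5]; simp
      exact (Finset.mem_filter.mp m).1
    | z => exact absurd rfl hv
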